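/- arXiv:2310.19473 — 2 statements merged into one kernel-verified Lean document; each statement's English description precedes it below -/
import Mathlib

section
/- Every Wetzel family has cardinality exactly 2^ℵ₀. -/
open Set Cardinal Filter Topology

def IsWetzel (F : Set (ℂ → ℂ)) : Prop :=
  (∀ f ∈ F, Differentiable ℂ f) ∧
    ∀ z : ℂ, Cardinal.mk ((fun f : ℂ → ℂ => f z) '' F) < Cardinal.mk F

/-- A set with no self-accumulation points in a second countable space is countable. -/
lemma countable_of_no_accPt {X : Type*} [TopologicalSpace X]
    [SecondCountableTopology X] {S : Set X}
    (h : ∀ x ∈ S, ¬AccPt x (𝓟 S)) : S.Countable := by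
  have : DiscreteTopology S := by
    rw [discreteTopology_subtype_iff]
    intro x hx
    have := h x hx
    rw [AccPt, not_neBot] at this
    exact this
  rw [← Set.countable_coe_iff]
  exact (TopologicalSpace.separableSpace_iff_countable).mp inferInstance

/-- Two distinct entire functions agree on a countable set. -/
lemma countable_eq_set {f g : ℂ → ℂ} (hf : Differentiable ℂ f) (hg : Differentiable ℂ g)
    (hne : f ≠ g) : {z : ℂ | f z = g z}.Countable := by
  have hfa : AnalyticOnNhd ℂ f Set.univ := hf.differentiableOn.analyticOnNhd isOpen_univ
  have hga : AnalyticOnNhd ℂ g Set.univ := hg.differentiableOn.analyticOnNhd isOpen_univ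
  rcases hfa.eqOn_or_eventually_ne_of_preconnected hga isPreconnected_univ with h | h
  · exact absurd (funext fun z => h (Set.mem_univ z)) hne
  · rw [Filter.Eventually, mem_codiscreteWithin_accPt] at h
    apply countable_of_no_accPt
    intro x hx
    have := h x (Set.mem_univ x)
    convert this using 3
    ext y
    simp only [Set.mem_diff, Set.mem_univ, Set.mem_setOf_eq, true_and]
    tauto

theorem wetzel_card (F : Set (ℂ → ℂ)) (hF : IsWetzel F) :
    Cardinal.mk F = Cardinal.continuum := by
  obtain ⟨hdiff, hcard⟩ := hF
  -- Upper bound: entire functions are continuous, determined by values on a countable dense set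
  have hub : #F ≤ 𝔠 := by
    obtain ⟨s, hsc, hsd⟩ := TopologicalSpace.exists_countable_dense ℂ
    have : #F ≤ #(s → ℂ) := by
      apply Cardinal.mk_le_of_injective (f := fun (f : F) (x : s) => (f : ℂ → ℂ) x)
      intro f g hfg
      ext1
      refine Continuous.ext_on hsd (hdiff f f.2).continuous (hdiff g g.2).continuous ?_
      intro x hx
      exact congrFun hfg ⟨x, hx⟩
    refine this.trans ?_
    rw [Cardinal.mk_arrow, mk_complex, Cardinal.lift_id, Cardinal.lift_id]
    calc 𝔠 ^ #s ≤ 𝔠 ^ ℵ₀ := by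
          apply Cardinal.power_le_power_left Cardinal.continuum_ne_zero
          exact (Cardinal.mk_le_aleph0_iff.mpr hsc)
      _ = 𝔠 := Cardinal.continuum_power_aleph0
  -- Lower bound
  have hlb : 𝔠 ≤ #F := by
    by_contra hlt
    push_neg at hlt
    -- every z lies in some agreement set
    have hcover : (Set.univ : Set ℂ) ⊆ ⋃ p : F × F, {z : ℂ | (p.1 : ℂ → ℂ) z = (p.2 : ℂ → ℂ) z ∧ (p.1 : ℂ → ℂ) ≠ p.2} := by
      intro z _
      have := hcard z
      have hni : ¬Set.InjOn (fun f : ℂ → ℂ => f z) F := by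
        intro hinj
        rw [Cardinal.mk_image_eq_of_injOn _ _ hinj] at this
        exact lt_irrefl _ this
      rw [Set.InjOn] at hni
      push_neg at hni
      obtain ⟨f, hf, g, hg, hfg, hne⟩ := hni
      exact Set.mem_iUnion.mpr ⟨(⟨f, hf⟩, ⟨g, hg⟩), hfg, hne⟩
    have hcc : #(⋃ p : F × F, {z : ℂ | (p.1 : ℂ → ℂ) z = (p.2 : ℂ → ℂ) z ∧ (p.1 : ℂ → ℂ) ≠ p.2}) < 𝔠 := by
      apply lt_of_le_of_lt (Cardinal.mk_iUnion_le _)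
      have hb : ∀ p : F × F, #({z : ℂ | (p.1 : ℂ → ℂ) z = (p.2 : ℂ → ℂ) z ∧ (p.1 : ℂ → ℂ) ≠ p.2}) ≤ ℵ₀ := by
        intro p
        by_cases hne : (p.1 : ℂ → ℂ) = (p.2 : ℂ → ℂ)
        · have : {z : ℂ | (p.1 : ℂ → ℂ) z = (p.2 : ℂ → ℂ) z ∧ (p.1 : ℂ → ℂ) ≠ p.2} = ∅ := by
            ext z; simp [hne]
          rw [this]
          simp
        · have hsub : {z : ℂ | (p.1 : ℂ → ℂ) z = (p.2 : ℂ → ℂ) z ∧ (p.1 : ℂ → ℂ) ≠ p.2} ⊆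
              {z : ℂ | (p.1 : ℂ → ℂ) z = (p.2 : ℂ → ℂ) z} := fun z hz => hz.1
          have hct := countable_eq_set (hdiff _ p.1.2) (hdiff _ p.2.2) hne
          exact Cardinal.mk_le_aleph0_iff.mpr (hct.mono hsub)
      have hFne : Nonempty F := by
        rcases F.eq_empty_or_nonempty with h | h
        · exfalso; have := hcard 0; rw [h] at this; simp at this
        · exact h.to_subtype
      calc #(F × F) * ⨆ p : F × F, #({z : ℂ | (p.1 : ℂ → ℂ) z = (p.2 : ℂ → ℂ) z ∧ (p.1 : ℂ → ℂ) ≠ p.2})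
          ≤ #(F × F) * ℵ₀ := mul_le_mul_right (ciSup_le' hb) _
        _ < 𝔠 := by
            apply Cardinal.mul_lt_of_lt Cardinal.aleph0_le_continuum _ Cardinal.aleph0_lt_continuum
            rw [Cardinal.mk_prod, Cardinal.lift_id]
            exact Cardinal.mul_lt_of_lt Cardinal.aleph0_le_continuum hlt hlt
    have : 𝔠 ≤ #(⋃ p : F × F, {z : ℂ | (p.1 : ℂ → ℂ) z = (p.2 : ℂ → ℂ) z ∧ (p.1 : ℂ → ℂ) ≠ p.2}) := by
      rw [← mk_univ_complex]
      exact Cardinal.mk_le_mk_of_subset hcover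
    exact absurd (this.trans_lt hcc) (lt_irrefl _)
  exact le_antisymm hub hlb
end

section
/- The continuum hypothesis implies the existence of a Wetzel family. -/
open Set Metric Filter Function Cardinal

universe u v

theorem exists_transfinite_recursion {α β : Type*} [Preorder α] [WellFoundedLT α]
    {P : (x : α) → (Iio x → β) → β → Prop} (h : ∀ x g, ∃ b, P x g b) :
    ∃ f : α → β, ∀ x, P x (fun y => f y) (f x) := by
  choose next hnext using h
  let f : α → β := wellFounded_lt.fix fun x prev => next x fun y => prev y y.2
  refine ⟨f, fun x => ?_⟩
  rw [show f x = _ from wellFounded_lt.fix_eq _ x]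
  exact hnext x _

theorem injective_of_forall_notMem_range_Iio {α β : Type*} [LinearOrder α] {f : α → β}
    (hf : ∀ x, f x ∉ range fun y : Iio x => f y) : Injective f := by
  intro x y hxy
  rcases lt_trichotomy x y with h | h | h
  · exact (hf y ⟨⟨x, h⟩, hxy⟩).elim
  · exact h
  · exact (hf x ⟨⟨y, h⟩, hxy.symm⟩).elim

theorem Set.Countable.exists_injective_nat_subset_range {α : Type*} [Infinite α] {s : Set α}
    (hs : s.Countable) : ∃ w : ℕ → α, Injective w ∧ s ⊆ range w := by
  let t := s ∪ range (_root_.Infinite.natEmbedding α)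
  have : Countable t := (hs.union (countable_range _)).to_subtype
  have : Infinite t :=
    ((infinite_range_of_injective (_root_.Infinite.natEmbedding α).injective).mono
      subset_union_right).to_subtype
  have := (nonempty_denumerable t).some
  let e := (Denumerable.eqv t).symm
  refine ⟨fun n => e n, Subtype.val_injective.comp e.injective, fun z hz => ?_⟩
  exact ⟨e.symm ⟨z, Or.inl hz⟩, by simp⟩

theorem Dense.exists_norm_lt_add_mul_mem {𝕜 : Type*} [NormedField 𝕜] {D : Set 𝕜}
    (hD : Dense D) (a : 𝕜) {b : 𝕜} (hb : b ≠ 0) {ε : ℝ} (hε : 0 < ε) :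
    ∃ c, ‖c‖ < ε ∧ a + c * b ∈ D := by
  obtain ⟨d, hdD, hd⟩ := hD.exists_dist_lt a (mul_pos hε (norm_pos_iff.2 hb))
  refine ⟨(d - a) / b, ?_, by rwa [div_mul_cancel₀ _ hb, add_sub_cancel]⟩
  rw [norm_div, div_lt_iff₀ (norm_pos_iff.2 hb), ← dist_eq_norm, dist_comm]
  exact hd

theorem IsCompact.exists_pos_forall_norm_mul_le {X 𝕜 : Type*} [TopologicalSpace X]
    [NormedField 𝕜] {K : Set X} (hK : IsCompact K) {g : X → 𝕜} (hg : ContinuousOn g K) {δ : ℝ}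
    (hδ : 0 < δ) : ∃ ε > 0, ∀ c : 𝕜, ‖c‖ < ε → ∀ z ∈ K, ‖c * g z‖ ≤ δ := by
  obtain ⟨C, hC⟩ := hK.exists_bound_of_continuousOn hg
  have hC1 : 0 < max C 0 + 1 := by positivity
  refine ⟨δ / (max C 0 + 1), div_pos hδ hC1, fun c hc z hz => ?_⟩
  calc ‖c * g z‖ = ‖c‖ * ‖g z‖ := norm_mul _ _
    _ ≤ δ / (max C 0 + 1) * (max C 0 + 1) := by
        gcongr
        exact (hC z hz).trans ((le_max_left _ _).trans (le_add_of_nonneg_right zero_le_one))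
    _ = δ := div_mul_cancel₀ _ hC1.ne'

theorem differentiable_tsum_of_norm_le_on_closedBall {F : ℕ → ℂ → ℂ} {u : ℕ → ℝ}
    (hF : ∀ k, Differentiable ℂ (F k)) (hu : Summable u)
    (hFu : ∀ k : ℕ, ∀ z ∈ closedBall (0 : ℂ) (k : ℝ), ‖F k z‖ ≤ u k) :
    Differentiable ℂ fun z => ∑' k, F k z := by
  intro z
  obtain ⟨R, hR⟩ := exists_nat_gt ‖z‖
  have hbound : ∀ᶠ k in cofinite, ∀ y ∈ ball (0 : ℂ) R, ‖F k y‖ ≤ u k := by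
    rw [Nat.cofinite_eq_atTop]
    filter_upwards [eventually_ge_atTop R] with k hk y hy
    exact hFu k y (closedBall_subset_closedBall (Nat.cast_le.2 hk) (ball_subset_closedBall hy))
  have hdiff := (tendstoUniformlyOn_tsum_of_cofinite_eventually hu hbound)
    |>.tendstoLocallyUniformlyOn |>.differentiableOn (Eventually.of_forall fun t =>
      (Differentiable.fun_sum fun k _ => hF k).differentiableOn) isOpen_ball
  exact hdiff.differentiableAt (isOpen_ball.mem_nhds (by simpa using hR))

theorem countable_of_mk_lt_continuum (hCH : continuum.{u} = ℵ₁) {α : Type v} {s : Set α}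
    (hs : #s < 𝔠) : s.Countable := by
  have hCHv : continuum.{v} = ℵ₁ :=
    lift_inj.{v, u}.1 (by simpa using congrArg Cardinal.lift.{v} hCH)
  rwa [hCHv, lt_aleph_one_iff, le_aleph0_iff_set_countable] at hs

def newtonBasis {𝕜 : Type*} [CommRing 𝕜] (w : ℕ → 𝕜) (k : ℕ) (z : 𝕜) : 𝕜 :=
  ∏ j ∈ Finset.range k, (z - w j)

theorem differentiable_newtonBasis {𝕜 : Type*} [NontriviallyNormedField 𝕜] (w : ℕ → 𝕜)
    (k : ℕ) : Differentiable 𝕜 (newtonBasis w k) :=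
  Differentiable.fun_finsetProd fun _ _ => differentiable_id.sub_const _

theorem newtonBasis_apply_eq_zero {𝕜 : Type*} [CommRing 𝕜] (w : ℕ → 𝕜) {k m : ℕ} (h : m < k) :
    newtonBasis w k (w m) = 0 :=
  Finset.prod_eq_zero (Finset.mem_range.2 h) (sub_self _)

theorem newtonBasis_apply_self_ne_zero {𝕜 : Type*} [CommRing 𝕜] [IsDomain 𝕜] {w : ℕ → 𝕜}
    (hw : Injective w) (k : ℕ) : newtonBasis w k (w k) ≠ 0 :=
  Finset.prod_ne_zero_iff.2 fun _ hj =>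
    sub_ne_zero.2 fun h => (Finset.mem_range.1 hj).ne (hw h).symm

theorem tsum_mul_newtonBasis_apply {𝕜 : Type*} [CommRing 𝕜] [TopologicalSpace 𝕜]
    (w : ℕ → 𝕜) (c : ℕ → 𝕜) (m : ℕ) :
    ∑' k, c k * newtonBasis w k (w m) =
      ∑ k ∈ Finset.range m, c k * newtonBasis w k (w m) + c m * newtonBasis w m (w m) := by
  rw [← Finset.sum_range_succ]
  refine tsum_eq_sum fun k hk => ?_
  rw [Finset.mem_range, not_lt] at hk
  rw [newtonBasis_apply_eq_zero w hk, mul_zero]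

theorem exists_differentiable_forall_apply_mem {w : ℕ → ℂ} (hw : Injective w) {D : ℕ → Set ℂ}
    (hD : ∀ n, Dense (D n)) : ∃ f : ℂ → ℂ, Differentiable ℂ f ∧ ∀ n, f (w n) ∈ D n := by
  have hnext (m : ℕ) (a : ℂ) : ∃ b : ℂ,
      (∀ z ∈ closedBall (0 : ℂ) m, ‖b * newtonBasis w m z‖ ≤ (1 / 2) ^ m) ∧
        a + b * newtonBasis w m (w m) ∈ D m := by
    obtain ⟨ε, hε, hsmall⟩ := (isCompact_closedBall (0 : ℂ) m).exists_pos_forall_norm_mul_le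
      (differentiable_newtonBasis w m).continuous.continuousOn
      (by positivity : (0 : ℝ) < (1 / 2) ^ m)
    obtain ⟨b, hb, hbD⟩ :=
      (hD m).exists_norm_lt_add_mul_mem a (newtonBasis_apply_self_ne_zero hw m) hε
    exact ⟨b, hsmall b hb, hbD⟩
  -- The earlier coefficients already determine the series at `w m` up to the term `c m * ⋯`.
  obtain ⟨c, hc⟩ := exists_transfinite_recursion (β := ℂ) fun m (prev : Iio m → ℂ) =>
    hnext m (∑ j : Fin m, prev ⟨j, j.isLt⟩ * newtonBasis w j (w m))
  refine ⟨fun z => ∑' k, c k * newtonBasis w k z, ?_, fun n => ?_⟩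
  · exact differentiable_tsum_of_norm_le_on_closedBall
      (fun k => (differentiable_newtonBasis w k).const_mul (c k)) summable_geometric_two
      fun k => (hc k).1
  · simpa only [tsum_mul_newtonBasis_apply, ← Fin.sum_univ_eq_sum_range] using (hc n).2

theorem exists_differentiable_mapsTo_notMem_of_dense {D : Set ℂ} (hD : Dense D) {A : Set ℂ}
    (hA : A.Countable) {G : Set (ℂ → ℂ)} (hG : G.Countable) :
    ∃ f : ℂ → ℂ, Differentiable ℂ f ∧ MapsTo f A D ∧ f ∉ G := by
  obtain ⟨w, hw, hAw⟩ := hA.exists_injective_nat_subset_range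
  obtain ⟨g, hGg⟩ := countable_iff_exists_subset_range.1 hG
  obtain ⟨f, hf, hfD⟩ := exists_differentiable_forall_apply_mem hw
    fun n => hD.sdiff_singleton (g n (w n))
  refine ⟨f, hf, fun z hz => ?_, fun hfG => ?_⟩
  · obtain ⟨n, rfl⟩ := hAw hz
    exact (hfD n).1
  · obtain ⟨n, rfl⟩ := hGg hfG
    exact (hfD n).2 rfl

def IsUniversalSet (D : Set ℂ) : Prop :=
  #D < 𝔠 ∧ ∀ A : Set ℂ, #A < 𝔠 → ∀ G : Set (ℂ → ℂ), #G < 𝔠 →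
    ∃ f : ℂ → ℂ, Differentiable ℂ f ∧ MapsTo f A D ∧ f ∉ G

theorem isUniversalSet_of_countable_of_dense (hCH : continuum.{u} = ℵ₁) {D : Set ℂ}
    (hDc : D.Countable) (hDd : Dense D) : IsUniversalSet D := by
  refine ⟨(le_aleph0_iff_set_countable.2 hDc).trans_lt aleph0_lt_continuum, fun A hA G hG => ?_⟩
  exact exists_differentiable_mapsTo_notMem_of_dense hDd (countable_of_mk_lt_continuum hCH hA)
    (countable_of_mk_lt_continuum hCH hG)

theorem exists_isWetzel_of_isUniversalSet {D : Set ℂ} (hD : IsUniversalSet D) :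
    ∃ F : Set (ℂ → ℂ), IsWetzel F := by
  let O := (𝔠 : Cardinal.{0}).ord.ToType
  have hO : #O = 𝔠 := by rw [mk_toType, card_ord]
  obtain ⟨e⟩ : Nonempty (O ≃ ℂ) := Cardinal.eq.1 (hO.trans mk_complex.symm)
  have hIio (x : O) : #(Iio x) < 𝔠 := by simpa [hO] using mk_Iio_lt x (by simp [O])
  have hIic (x : O) : #(Iic x) < 𝔠 := by
    rw [← Iio_insert]
    exact mk_insert_le.trans_lt
      (add_lt_of_lt aleph0_le_continuum (hIio x) (one_lt_aleph0.trans aleph0_lt_continuum))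
  obtain ⟨f, hf⟩ := exists_transfinite_recursion (α := O) fun x (prev : Iio x → ℂ → ℂ) =>
    hD.2 (e '' Iio x) (mk_image_le.trans_lt (hIio x)) (range prev)
      (mk_range_le.trans_lt (hIio x))
  have hinj : Injective f := injective_of_forall_notMem_range_Iio fun x => (hf x).2.2
  refine ⟨range f, forall_mem_range.2 fun x => (hf x).1, fun z => ?_⟩
  have hvalues :
      (fun g : ℂ → ℂ => g z) '' range f ⊆ D ∪ (fun x => f x z) '' Iic (e.symm z) := by
    rintro _ ⟨_, ⟨x, rfl⟩, rfl⟩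
    rcases le_or_gt x (e.symm z) with hle | hlt
    · exact Or.inr ⟨x, hle, rfl⟩
    · exact Or.inl ((hf x).2.1 ⟨e.symm z, hlt, e.apply_symm_apply z⟩)
  calc #((fun g : ℂ → ℂ => g z) '' range f)
      ≤ #D + #(Iic (e.symm z)) := (mk_le_mk_of_subset hvalues).trans
        ((mk_union_le _ _).trans (add_le_add_right mk_image_le _))
    _ < 𝔠 := add_lt_of_lt aleph0_le_continuum hD.1 (hIic _)
    _ = #(range f) := by rw [mk_range_eq f hinj, hO]

theorem wetzel_of_CH (hCH : Cardinal.continuum = Cardinal.aleph 1) :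
    ∃ F : Set (ℂ → ℂ), IsWetzel F := by
  obtain ⟨D, hDc, hDd⟩ := TopologicalSpace.exists_countable_dense ℂ
  exact exists_isWetzel_of_isUniversalSet (isUniversalSet_of_countable_of_dense hCH hDc hDd)
end
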